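/- arXiv:1506.03378 — 2 statements merged into one kernel-verified Lean document; each statement's English description precedes it below -/
import Mathlib

section
/- In the 2-Actions-And-2-Models case with θ1 the true model and reward gap Δ = μ1(θ1) − μ2(θ1) ≥ 0, the frequentist regret of Thompson Sampling with prior p_1 satisfies R_T(θ1, TS(p_1)) ≤ Δ·T·(1 − p_1(θ1)). -/
open MeasureTheory ProbabilityTheory

noncomputable section

/-- A two-action, two-model stochastic bandit instance.  Actions and models are both
indexed by `Fin 2`; model `0` is `θ1` and model `1` is `θ2`.  The reward distribution
`ν_i(θ)` of action `i` under model `θ` has density `ℓ i θ` with respect to the common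
measure `ν`, which is supported on `[0,1]`. -/
structure TwoTwoBandit where
  ν : Measure ℝ
  supp : ∀ᵐ x ∂ν, x ∈ Set.Icc (0 : ℝ) 1
  ℓ : Fin 2 → Fin 2 → ℝ → ℝ
  ℓ_meas : ∀ i θ, Measurable (ℓ i θ)
  ℓ_nonneg : ∀ i θ x, 0 ≤ ℓ i θ x
  ℓ_int : ∀ i θ, ∫ x, ℓ i θ x ∂ν = 1

namespace TwoTwoBandit

/-- The reward distribution `ν_i(θ)`. -/
def dist (B : TwoTwoBandit) (i θ : Fin 2) : Measure ℝ :=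
  B.ν.withDensity fun x => ENNReal.ofReal (B.ℓ i θ x)

/-- The mean reward `μ_i(θ)`. -/
def mean (B : TwoTwoBandit) (i θ : Fin 2) : ℝ :=
  ∫ x, x * B.ℓ i θ x ∂B.ν

/-- The smoothness assumption with parameter `s`:  ν-almost surely,
`s⁻¹ · ℓ_i(θ1) ≤ ℓ_i(θ2) ≤ s · ℓ_i(θ1)` for both actions `i`. -/
def Smooth (B : TwoTwoBandit) (s : ℝ) : Prop :=
  ∀ i, ∀ᵐ x ∂B.ν, s⁻¹ * B.ℓ i 0 x ≤ B.ℓ i 1 x ∧ B.ℓ i 1 x ≤ s * B.ℓ i 0 x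

end TwoTwoBandit

/-- A realization of Thompson Sampling on the two-action two-model bandit `B`, with
prior mass `prior` on model `θ1` and true reward-generating model `θstar`.
`p t ω` is the posterior probability mass `p_t(θ1)` of model `θ1` at time `t`
(so `p_t(θ2) = 1 - p t ω`); `F` is the history filtration, `I t` the action selected at
step `t` and `X i t` the reward of action `i` at step `t`.  The fields state that:
the posterior is adapted, starts at the prior and evolves by the Bayes rule; conditionally
on the history the action `I t` equals `i` with probability `p_t(θ_i)`; and each reward
`X i t` is independent of the history and of `I t`, with distribution `ν_i(θstar)`. -/
structure TSProcess (B : TwoTwoBandit) (prior : ℝ) (θstar : Fin 2)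
    (Ω : Type*) [mΩ : MeasurableSpace Ω] where
  P : Measure Ω
  P_prob : IsProbabilityMeasure P
  F : Filtration ℕ mΩ
  I : ℕ → Ω → Fin 2
  X : Fin 2 → ℕ → Ω → ℝ
  p : ℕ → Ω → ℝ
  I_meas : ∀ t, Measurable[F (t + 1)] (I t)
  X_meas : ∀ i t, Measurable (X i t)
  p_adapted : ∀ t, Measurable[F t] (p t)
  p_mem : ∀ t ω, p t ω ∈ Set.Icc (0 : ℝ) 1
  p_one : ∀ ω, p 1 ω = prior
  bayes : ∀ t ω, 1 ≤ t →
    p (t + 1) ω = p t ω * B.ℓ (I t ω) 0 (X (I t ω) t ω) /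
      (p t ω * B.ℓ (I t ω) 0 (X (I t ω) t ω)
        + (1 - p t ω) * B.ℓ (I t ω) 1 (X (I t ω) t ω))
  action_prob : ∀ t, 1 ≤ t →
    P[(fun ω => if I t ω = 0 then (1 : ℝ) else 0)|F t] =ᵐ[P] p t
  reward_law : ∀ i t, P.map (X i t) = B.dist i θstar
  reward_indep : ∀ i t,
    Indep (MeasurableSpace.comap (X i t) inferInstance)
      (F t ⊔ MeasurableSpace.comap (I t) ⊤) P

namespace TSProcess

variable {B : TwoTwoBandit} {prior : ℝ} {θstar : Fin 2} {Ω : Type*} [MeasurableSpace Ω]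

/-- The frequentist regret `R_T(θstar, TS(prior)) = E Σ_{t=1}^T (μ_1(θstar) − μ_{I_t}(θstar))`
of the Thompson Sampling process over horizon `T` (suitable when action `0` is optimal
under the true model, e.g. `θstar = θ1`). -/
def regret (proc : TSProcess B prior θstar Ω) (T : ℕ) : ℝ :=
  ∫ ω, (∑ t ∈ Finset.Icc 1 T, (B.mean 0 θstar - B.mean (proc.I t ω) θstar)) ∂proc.P

/-- The frequentist regret `E Σ_{t=1}^T (max_i μ_i(θstar) − μ_{I_t}(θstar))`. -/
def regretMax (proc : TSProcess B prior θstar Ω) (T : ℕ) : ℝ :=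
  ∫ ω, (∑ t ∈ Finset.Icc 1 T,
    (max (B.mean 0 θstar) (B.mean 1 θstar) - B.mean (proc.I t ω) θstar)) ∂proc.P

end TSProcess

/-- The Bernoulli distribution `Bern(q)` on `{0,1} ⊆ ℝ` with mean `q`. -/
def bern (q : ℝ) : Measure ℝ :=
  ENNReal.ofReal q • Measure.dirac 1 + ENNReal.ofReal (1 - q) • Measure.dirac 0

/-! Under the true model `θ1` the posterior mass `p_t(θ1)` is a submartingale: from prior mass
`q`, observing a reward with likelihoods `a = ℓ_i(θ1)`, `b = ℓ_i(θ2)` gives expected posterior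
`∫ q a² / g`, where `g = q a + (1 - q) b`, and the tangent-line bound `a² / g ≥ 2a - g` makes
this at least `q (2 - 1) = q`. Since `I_t` is sampled from the posterior, the probability of
playing the optimal action at time `t` is `E p_t(θ1) ≥ p_1(θ1)`, so each round costs at most
`Δ (1 - p_1(θ1))` in expectation. -/

open Set

def bayesUpdate (q a b : ℝ) : ℝ := q * a / (q * a + (1 - q) * b)

@[fun_prop]
lemma Measurable.bayesUpdate {α : Type*} [MeasurableSpace α] {q a b : α → ℝ} (hq : Measurable q)
    (ha : Measurable a) (hb : Measurable b) :
    Measurable fun x => bayesUpdate (q x) (a x) (b x) := by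
  unfold _root_.bayesUpdate
  fun_prop

section BayesUpdate

variable {q a b : ℝ}

lemma bayesUpdate_mem_Icc (hq : q ∈ Icc (0 : ℝ) 1) (ha : 0 ≤ a) (hb : 0 ≤ b) :
    bayesUpdate q a b ∈ Icc (0 : ℝ) 1 := by
  have hqa : 0 ≤ q * a := mul_nonneg hq.1 ha
  have hqb : 0 ≤ (1 - q) * b := mul_nonneg (by linarith [hq.2]) hb
  exact ⟨div_nonneg hqa (add_nonneg hqa hqb), div_le_one_of_le₀ (by linarith) (by positivity)⟩

/-- The tangent-line bound `a² / g ≥ 2a - g`, for `g = q a + (1 - q) b`, multiplied by `q`. -/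
lemma mul_two_mul_sub_le_bayesUpdate_mul (hq : q ∈ Icc (0 : ℝ) 1) (ha : 0 ≤ a) (hb : 0 ≤ b) :
    q * (2 * a - (q * a + (1 - q) * b)) ≤ bayesUpdate q a b * a := by
  have hqa : 0 ≤ q * a := mul_nonneg hq.1 ha
  have hqb : 0 ≤ (1 - q) * b := mul_nonneg (by linarith [hq.2]) hb
  rcases (add_nonneg hqa hqb).eq_or_lt with hg | hg
  · have : q * a = 0 := by linarith
    rw [bayesUpdate, ← hg, div_zero, zero_mul]
    linarith
  · rw [bayesUpdate, div_mul_eq_mul_div, le_div_iff₀ hg]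
    nlinarith [mul_nonneg hq.1 (sq_nonneg (a - (q * a + (1 - q) * b)))]

end BayesUpdate

lemma le_integral_bayesUpdate_mul {α : Type*} [MeasurableSpace α] {ν : Measure α} {f g : α → ℝ}
    {q : ℝ} (hq : q ∈ Icc (0 : ℝ) 1) (hf : Integrable f ν) (hg : Integrable g ν)
    (hf₀ : ∀ x, 0 ≤ f x) (hg₀ : ∀ x, 0 ≤ g x) (hf₁ : ∫ x, f x ∂ν = 1) (hg₁ : ∫ x, g x ∂ν = 1) :
    q ≤ ∫ x, bayesUpdate q (f x) (g x) * f x ∂ν := by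
  have hlower : Integrable (fun x => q * (2 - q) * f x - q * (1 - q) * g x) ν :=
    (hf.const_mul _).sub (hg.const_mul _)
  have hupdate : Integrable (fun x => bayesUpdate q (f x) (g x) * f x) ν := by
    refine hf.mono' ?_ (.of_forall fun x => ?_)
    · have := hf.aemeasurable
      have := hg.aemeasurable
      exact (by unfold bayesUpdate; fun_prop : AEMeasurable _ ν).aestronglyMeasurable
    · obtain ⟨h₀, h₁⟩ := bayesUpdate_mem_Icc hq (hf₀ x) (hg₀ x)
      rw [Real.norm_of_nonneg (mul_nonneg h₀ (hf₀ x))]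
      exact mul_le_of_le_one_left (hf₀ x) h₁
  calc q = ∫ x, (q * (2 - q) * f x - q * (1 - q) * g x) ∂ν := by
        rw [integral_sub (hf.const_mul _) (hg.const_mul _), integral_const_mul,
          integral_const_mul, hf₁, hg₁]
        ring
    _ ≤ ∫ x, bayesUpdate q (f x) (g x) * f x ∂ν := by
        refine integral_mono hlower hupdate fun x => ?_
        have := mul_two_mul_sub_le_bayesUpdate_mul hq (hf₀ x) (hg₀ x)
        dsimp only
        linarith

lemma ProbabilityTheory.IndepFun.integral_comp_prodMk {Ω β γ E : Type*} [MeasurableSpace Ω]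
    [MeasurableSpace β] [MeasurableSpace γ] [NormedAddCommGroup E] [NormedSpace ℝ E]
    [CompleteSpace E] {P : Measure Ω} [IsFiniteMeasure P] {Z : Ω → β} {X : Ω → γ}
    (h : IndepFun Z X P) (hZ : AEMeasurable Z P) (hX : AEMeasurable X P) {H : β × γ → E}
    (hH : Integrable H ((P.map Z).prod (P.map X))) :
    ∫ ω, H (Z ω, X ω) ∂P = ∫ ω, ∫ x, H (Z ω, x) ∂(P.map X) ∂P := by
  have hmap := (indepFun_iff_map_prod_eq_prod_map_map hZ hX).mp h
  rw [← integral_map (hZ.prodMk hX) (hmap ▸ hH.aestronglyMeasurable), hmap, integral_prod H hH,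
    integral_map hZ hH.integral_prod_left.aestronglyMeasurable]

namespace TwoTwoBandit

variable (B : TwoTwoBandit)

lemma integrable_ℓ (i θ : Fin 2) : Integrable (B.ℓ i θ) B.ν := by
  by_contra h
  simpa [integral_undef h] using B.ℓ_int i θ

lemma integral_dist (i θ : Fin 2) (φ : ℝ → ℝ) :
    ∫ x, φ x ∂B.dist i θ = ∫ x, φ x * B.ℓ i θ x ∂B.ν := by
  rw [dist, integral_withDensity_eq_integral_toReal_smul
    (B.ℓ_meas i θ).ennreal_ofReal (.of_forall fun _ => ENNReal.ofReal_lt_top)]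
  simp only [ENNReal.toReal_ofReal (B.ℓ_nonneg _ _ _), smul_eq_mul, mul_comm]

lemma le_integral_bayesUpdate_dist {q : ℝ} (hq : q ∈ Icc (0 : ℝ) 1) (i : Fin 2) :
    q ≤ ∫ x, bayesUpdate q (B.ℓ i 0 x) (B.ℓ i 1 x) ∂B.dist i 0 := by
  rw [integral_dist]
  exact le_integral_bayesUpdate_mul hq (B.integrable_ℓ i 0) (B.integrable_ℓ i 1)
    (B.ℓ_nonneg i 0) (B.ℓ_nonneg i 1) (B.ℓ_int i 0) (B.ℓ_int i 1)

/-- In `z = ((q, j), x)`, `q` is the posterior mass of `θ1`, `j` the played action and `x` the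
reward of action `i`. The posterior lives in `Icc 0 1` so that this function is bounded. -/
def updateIfPlayed (i : Fin 2) (z : (Icc (0 : ℝ) 1 × Fin 2) × ℝ) : ℝ :=
  if z.1.2 = i then bayesUpdate z.1.1 (B.ℓ i 0 z.2) (B.ℓ i 1 z.2) else 0

lemma measurable_updateIfPlayed (i : Fin 2) : Measurable (B.updateIfPlayed i) := by
  refine .ite (measurable_fst.snd (measurableSet_singleton i)) ?_ measurable_const
  have := B.ℓ_meas i 0
  have := B.ℓ_meas i 1
  fun_prop

lemma norm_updateIfPlayed_le_one (i : Fin 2) (z : (Icc (0 : ℝ) 1 × Fin 2) × ℝ) :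
    ‖B.updateIfPlayed i z‖ ≤ 1 := by
  obtain ⟨h₀, h₁⟩ := bayesUpdate_mem_Icc z.1.1.2 (B.ℓ_nonneg i 0 z.2) (B.ℓ_nonneg i 1 z.2)
  rw [updateIfPlayed]
  split_ifs
  · rwa [Real.norm_of_nonneg h₀]
  · simp

lemma le_sum_integral_updateIfPlayed (z : Icc (0 : ℝ) 1 × Fin 2) :
    (z.1 : ℝ) ≤ ∑ i, ∫ x, B.updateIfPlayed i (z, x) ∂B.dist i 0 := by
  have hq := B.le_integral_bayesUpdate_dist z.1.2
  rcases Fin.exists_fin_two.mp ⟨z.2, rfl⟩ with h | h <;>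
    simpa [updateIfPlayed, h] using hq _

end TwoTwoBandit

namespace TSProcess

variable {B : TwoTwoBandit} {prior : ℝ} {θstar : Fin 2} {Ω : Type*} [MeasurableSpace Ω]
  (proc : TSProcess B prior θstar Ω)

def posteriorAction (t : ℕ) (ω : Ω) : Icc (0 : ℝ) 1 × Fin 2 :=
  (⟨proc.p t ω, proc.p_mem t ω⟩, proc.I t ω)

lemma measurable_p (t : ℕ) : Measurable (proc.p t) :=
  (proc.p_adapted t).mono (proc.F.le t) le_rfl

lemma measurable_I (t : ℕ) : Measurable (proc.I t) :=
  (proc.I_meas t).mono (proc.F.le (t + 1)) le_rfl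

lemma measurable_posteriorAction (t : ℕ) : Measurable (proc.posteriorAction t) :=
  (proc.measurable_p t).subtype_mk.prodMk (proc.measurable_I t)

lemma integrable_p (t : ℕ) : Integrable (proc.p t) proc.P :=
  have := proc.P_prob
  .of_bound (proc.measurable_p t).aestronglyMeasurable 1 (.of_forall fun ω => by
    simpa [abs_le] using ⟨by linarith [(proc.p_mem t ω).1], (proc.p_mem t ω).2⟩)

lemma integrable_comp_I (f : Fin 2 → ℝ) (t : ℕ) : Integrable (fun ω => f (proc.I t ω)) proc.P :=
  have := proc.P_prob
  Integrable.of_finite.comp_measurable (proc.measurable_I t)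

lemma indepFun_posteriorAction_X (i : Fin 2) (t : ℕ) :
    IndepFun (proc.posteriorAction t) (proc.X i t) proc.P := by
  refine (indep_of_indep_of_le_right (proc.reward_indep i t) (Measurable.comap_le ?_)).symm
  refine .prodMk ((proc.p_adapted t).mono le_sup_left le_rfl).subtype_mk ?_
  exact Measurable.of_comap_le ((MeasurableSpace.comap_mono le_top).trans le_sup_right)

lemma p_succ_eq_sum_updateIfPlayed {t : ℕ} (ht : 1 ≤ t) (ω : Ω) :
    proc.p (t + 1) ω = ∑ i, B.updateIfPlayed i (proc.posteriorAction t ω, proc.X i t ω) := by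
  rw [proc.bayes t ω ht, Fin.sum_univ_two]
  rcases Fin.exists_fin_two.mp ⟨proc.I t ω, rfl⟩ with h | h <;>
    simp [TwoTwoBandit.updateIfPlayed, posteriorAction, h, bayesUpdate]

lemma integral_p_le_integral_p_succ (proc : TSProcess B prior 0 Ω) {t : ℕ} (ht : 1 ≤ t) :
    ∫ ω, proc.p t ω ∂proc.P ≤ ∫ ω, proc.p (t + 1) ω ∂proc.P := by
  have := proc.P_prob
  set Z := proc.posteriorAction t
  have hZ := proc.measurable_posteriorAction t
  have hH_int (i : Fin 2) :
      Integrable (B.updateIfPlayed i) ((proc.P.map Z).prod (proc.P.map (proc.X i t))) :=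
    .of_bound (B.measurable_updateIfPlayed i).aestronglyMeasurable 1
      (.of_forall (B.norm_updateIfPlayed_le_one i))
  have hstep_int (i : Fin 2) :
      Integrable (fun ω => B.updateIfPlayed i (Z ω, proc.X i t ω)) proc.P :=
    .of_bound ((B.measurable_updateIfPlayed i).comp
      (hZ.prodMk (proc.X_meas i t))).aestronglyMeasurable 1
      (.of_forall fun ω => B.norm_updateIfPlayed_le_one i _)
  have hinner_int (i : Fin 2) :
      Integrable (fun ω => ∫ x, B.updateIfPlayed i (Z ω, x) ∂proc.P.map (proc.X i t)) proc.P :=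
    (hH_int i).integral_prod_left.comp_measurable hZ
  calc ∫ ω, proc.p t ω ∂proc.P
      ≤ ∫ ω, ∑ i, ∫ x, B.updateIfPlayed i (Z ω, x) ∂proc.P.map (proc.X i t) ∂proc.P := by
        refine integral_mono (proc.integrable_p t)
          (integrable_finsetSum _ fun i _ => hinner_int i) fun ω => ?_
        simp only [proc.reward_law]
        exact B.le_sum_integral_updateIfPlayed (Z ω)
    _ = ∑ i, ∫ ω, B.updateIfPlayed i (Z ω, proc.X i t ω) ∂proc.P := by
        rw [integral_finsetSum _ fun i _ => hinner_int i]
        refine Finset.sum_congr rfl fun i _ => ?_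
        exact ((proc.indepFun_posteriorAction_X i t).integral_comp_prodMk hZ.aemeasurable
          (proc.X_meas i t).aemeasurable (hH_int i)).symm
    _ = ∫ ω, proc.p (t + 1) ω ∂proc.P := by
        simp_rw [proc.p_succ_eq_sum_updateIfPlayed ht]
        exact (integral_finsetSum _ fun i _ => hstep_int i).symm
lemma prior_le_integral_p (proc : TSProcess B prior 0 Ω) {t : ℕ} (ht : 1 ≤ t) :
    prior ≤ ∫ ω, proc.p t ω ∂proc.P := by
  have := proc.P_prob
  induction t, ht using Nat.le_induction with
  | base => simp [proc.p_one]
  | succ n hn ih => exact ih.trans (proc.integral_p_le_integral_p_succ hn)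

lemma integral_action_indicator_eq_integral_p {t : ℕ} (ht : 1 ≤ t) :
    ∫ ω, (if proc.I t ω = 0 then (1 : ℝ) else 0) ∂proc.P = ∫ ω, proc.p t ω ∂proc.P := by
  have := proc.P_prob
  rw [← integral_condExp (proc.F.le t)]
  exact integral_congr_ae (proc.action_prob t ht)

lemma integral_mean_sub_mean_I (θ : Fin 2) {t : ℕ} (ht : 1 ≤ t) :
    ∫ ω, (B.mean 0 θ - B.mean (proc.I t ω) θ) ∂proc.P
      = (B.mean 0 θ - B.mean 1 θ) * (1 - ∫ ω, proc.p t ω ∂proc.P) := by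
  have := proc.P_prob
  have hgap (ω) : B.mean 0 θ - B.mean (proc.I t ω) θ
      = (B.mean 0 θ - B.mean 1 θ) * (1 - if proc.I t ω = 0 then (1 : ℝ) else 0) := by
    rcases Fin.exists_fin_two.mp ⟨proc.I t ω, rfl⟩ with h | h <;> simp [h]
  simp_rw [hgap]
  rw [integral_const_mul, integral_sub (integrable_const 1)
    (proc.integrable_comp_I (fun j => if j = 0 then 1 else 0) t), integral_const,
    proc.integral_action_indicator_eq_integral_p ht, probReal_univ, one_smul]

end TSProcess

/-- **Lemma 4(d) (trivial regret bound).**  In the 2-Actions-And-2-Models case with true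
model `θ1` and reward gap `Δ = μ1(θ1) − μ2(θ1) ≥ 0`, the frequentist regret of Thompson
Sampling with prior `p_1` satisfies `R_T(θ1, TS(p_1)) ≤ Δ · T · (1 − p_1(θ1))`. -/
theorem thompson_sampling_regret_le_gap_mul
    (B : TwoTwoBandit) (prior : ℝ)
    (hgap : 0 ≤ B.mean 0 0 - B.mean 1 0) (T : ℕ)
    (Ω : Type*) [MeasurableSpace Ω] (proc : TSProcess B prior 0 Ω) :
    proc.regret T ≤ (B.mean 0 0 - B.mean 1 0) * T * (1 - prior) := by
  rw [TSProcess.regret,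
    integral_finsetSum _ fun t _ => proc.integrable_comp_I (B.mean 0 0 - B.mean · 0) t]
  calc ∑ t ∈ Finset.Icc 1 T, ∫ ω, (B.mean 0 0 - B.mean (proc.I t ω) 0) ∂proc.P
      ≤ ∑ t ∈ Finset.Icc 1 T, (B.mean 0 0 - B.mean 1 0) * (1 - prior) := by
        refine Finset.sum_le_sum fun t ht => ?_
        have ht : 1 ≤ t := (Finset.mem_Icc.mp ht).1
        rw [proc.integral_mean_sub_mean_I 0 ht]
        exact mul_le_mul_of_nonneg_left (by linarith [proc.prior_le_integral_p ht]) hgap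
    _ = (B.mean 0 0 - B.mean 1 0) * T * (1 - prior) := by
        rw [Finset.sum_const, Nat.card_Icc, Nat.add_sub_cancel, nsmul_eq_mul]
        ring

end
end

section
/- Let α ∈ [0,1] and let ν1 and ν2 be two probability distributions on [0,1] with means μ1 and μ2 respectively. Then the Kullback–Leibler divergence satisfies KL(ν1, α·ν1 + (1 − α)·ν2) ≥ ((1 − α)² / 2)·|μ1 − μ2|². -/
/-!
Write `ρ = α ν₁ + (1 - α) ν₂`. By the Donsker–Varadhan inequality (Gibbs' inequality against an
exponentially tilted `ρ`), `KL(ν₁, ρ) ≥ t ∫ x dν₁ - log ∫ exp (t x) dρ` for every real `t`, and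
Hoeffding's lemma bounds the log-moment generating function of a `[0, 1]`-valued variable by
`t ∫ x dρ + t² / 8`. Optimising in `t` gives `KL(ν₁, ρ) ≥ 2 (∫ x dν₁ - ∫ x dρ)²`, and the
difference of means is `(1 - α) (μ₁ - μ₂)`.
-/

open MeasureTheory
open scoped Classical

noncomputable section

/-- The Kullback–Leibler divergence `KL(μ, ρ) = ∫ log (dμ/dρ) dμ`, equal to `⊤` unless
`μ ≪ ρ` and the log-likelihood ratio is integrable. -/
def klDiv (μ ρ : Measure ℝ) : EReal :=
  if μ ≪ ρ ∧ Integrable (fun x => Real.log ((μ.rnDeriv ρ x).toReal)) μ then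
    ((∫ x, Real.log ((μ.rnDeriv ρ x).toReal) ∂μ : ℝ) : EReal)
  else ⊤

open ProbabilityTheory Real Set

theorem sq_le_mul_of_forall_mul_sub_sq_le {d c K : ℝ} (hc : 0 ≤ c)
    (h : ∀ t, t * d - c * t ^ 2 / 8 ≤ K) : 2 * d ^ 2 ≤ c * K := by
  rcases hc.eq_or_lt with rfl | hc
  · obtain rfl : d = 0 := by
      by_contra hd
      have := h ((K + 1) / d)
      rw [div_mul_cancel₀ _ hd] at this
      linarith
    simp
  · have hK : 2 * d ^ 2 / c ≤ K := by
      convert h (4 * d / c) using 1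
      field_simp
      ring
    rwa [div_le_iff₀' hc] at hK

section

variable {Ω : Type*} [MeasurableSpace Ω]

theorem isProbabilityMeasure_ofReal_smul_add_ofReal_smul {α : ℝ} (hα : α ∈ Icc (0 : ℝ) 1)
    (μ ν : Measure Ω) [IsProbabilityMeasure μ] [IsProbabilityMeasure ν] :
    IsProbabilityMeasure (ENNReal.ofReal α • μ + ENNReal.ofReal (1 - α) • ν) := by
  constructor
  simp only [Measure.add_apply, Measure.smul_apply, smul_eq_mul, measure_univ, mul_one]
  rw [← ENNReal.ofReal_add hα.1 (sub_nonneg.2 hα.2), add_sub_cancel, ENNReal.ofReal_one]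

theorem integral_ofReal_smul_add_ofReal_smul {a b : ℝ} (ha : 0 ≤ a) (hb : 0 ≤ b)
    {μ ν : Measure Ω} {f : Ω → ℝ} (hfμ : Integrable f μ) (hfν : Integrable f ν) :
    ∫ x, f x ∂(ENNReal.ofReal a • μ + ENNReal.ofReal b • ν) =
      a * ∫ x, f x ∂μ + b * ∫ x, f x ∂ν := by
  rw [integral_add_measure (hfμ.smul_measure ENNReal.ofReal_ne_top)
    (hfν.smul_measure ENNReal.ofReal_ne_top), integral_smul_measure, integral_smul_measure,
    ENNReal.toReal_ofReal ha, ENNReal.toReal_ofReal hb, smul_eq_mul, smul_eq_mul]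

variable {μ ν : Measure Ω} [IsProbabilityMeasure μ] [IsProbabilityMeasure ν]

theorem integral_sub_log_integral_exp_le_integral_llr {f : Ω → ℝ} (hμν : μ ≪ ν)
    (h_int : Integrable (llr μ ν) μ) (hfμ : Integrable f μ)
    (hfν : Integrable (fun x ↦ exp (f x)) ν) :
    ∫ x, f x ∂μ - log (∫ x, exp (f x) ∂ν) ≤ ∫ x, llr μ ν x ∂μ := by
  have : IsProbabilityMeasure (ν.tilted f) := isProbabilityMeasure_tilted hfν
  have hgibbs := InformationTheory.integral_llr_add_sub_measure_univ_nonneg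
    (hμν.trans (absolutelyContinuous_tilted hfν)) (integrable_llr_tilted_right hμν hfμ h_int hfν)
  rw [integral_llr_tilted_right hμν hfμ hfν h_int] at hgibbs
  simp only [probReal_univ, add_sub_cancel_right] at hgibbs
  linarith

theorem cgf_le_of_mem_Icc {X : Ω → ℝ} {a b : ℝ} (hX : AEMeasurable X ν)
    (hb : ∀ᵐ ω ∂ν, X ω ∈ Icc a b) (t : ℝ) :
    cgf X ν t ≤ t * ∫ ω, X ω ∂ν + (b - a) ^ 2 * t ^ 2 / 8 := by
  have hoeffding := (hasSubgaussianMGF_of_mem_Icc hX hb).cgf_le t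
  have hshift : cgf (fun ω ↦ X ω - ∫ x, X x ∂ν) ν t = cgf X ν t - t * ∫ ω, X ω ∂ν := by
    simp_rw [sub_eq_add_neg, cgf, mgf_add_const]
    rw [log_mul, log_exp]
    · ring
    · exact (mgf_pos (integrable_exp_mul_of_mem_Icc hX hb)).ne'
    · positivity
  have hparam : ((‖b - a‖₊ / 2 : NNReal) ^ 2 : NNReal) = (b - a) ^ 2 / 4 := by
    push_cast
    rw [Real.norm_eq_abs, div_pow, sq_abs]
    norm_num
  rw [hshift, hparam] at hoeffding
  linarith

theorem sq_integral_sub_integral_le_integral_llr {X : Ω → ℝ} {a b : ℝ} (hμν : μ ≪ ν)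
    (h_int : Integrable (llr μ ν) μ) (hX : AEMeasurable X ν) (hb : ∀ᵐ ω ∂ν, X ω ∈ Icc a b) :
    2 * (∫ ω, X ω ∂μ - ∫ ω, X ω ∂ν) ^ 2 ≤ (b - a) ^ 2 * ∫ ω, llr μ ν ω ∂μ := by
  have hXμ : Integrable X μ := Integrable.of_mem_Icc a b (hX.mono_ac hμν) (hμν.ae_le hb)
  refine sq_le_mul_of_forall_mul_sub_sq_le (sq_nonneg _) fun t ↦ ?_
  have hdonsker := integral_sub_log_integral_exp_le_integral_llr (f := fun ω ↦ t * X ω) hμν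
    h_int (hXμ.const_mul t) (integrable_exp_mul_of_mem_Icc hX hb)
  have hhoeffding := cgf_le_of_mem_Icc hX hb t
  rw [integral_const_mul] at hdonsker
  rw [cgf, mgf] at hhoeffding
  linarith

end

/-- **Lemma 7 (KL lower bound for mixtures).**  Let `α ∈ [0,1]` and let `ν1, ν2` be two
probability distributions on `[0,1]` with means `μ1, μ2`.  Then
`KL(ν1, α·ν1 + (1 − α)·ν2) ≥ ((1 − α)²/2) |μ1 − μ2|²`. -/
theorem kl_mixture_ge_mean_diff_sq (α : ℝ) (hα : α ∈ Set.Icc (0 : ℝ) 1)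
    (ν₁ ν₂ : Measure ℝ) [IsProbabilityMeasure ν₁] [IsProbabilityMeasure ν₂]
    (h₁ : ∀ᵐ x ∂ν₁, x ∈ Set.Icc (0 : ℝ) 1) (h₂ : ∀ᵐ x ∂ν₂, x ∈ Set.Icc (0 : ℝ) 1) :
    (((1 - α) ^ 2 / 2 * |(∫ x, x ∂ν₁) - ∫ x, x ∂ν₂| ^ 2 : ℝ) : EReal) ≤
      klDiv ν₁ (ENNReal.ofReal α • ν₁ + ENNReal.ofReal (1 - α) • ν₂) := by
  set ρ := ENNReal.ofReal α • ν₁ + ENNReal.ofReal (1 - α) • ν₂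
  have := isProbabilityMeasure_ofReal_smul_add_ofReal_smul hα ν₁ ν₂
  rw [klDiv]
  split_ifs with h
  · obtain ⟨hac, h_int⟩ := h
    have hρ : ∀ᵐ x ∂ρ, x ∈ Icc (0 : ℝ) 1 :=
      ae_add_measure_iff.2 ⟨Measure.ae_smul_measure h₁ _, Measure.ae_smul_measure h₂ _⟩
    have hmean : ∫ x, x ∂ρ = α * ∫ x, x ∂ν₁ + (1 - α) * ∫ x, x ∂ν₂ :=
      integral_ofReal_smul_add_ofReal_smul hα.1 (sub_nonneg.2 hα.2)
        (Integrable.of_mem_Icc 0 1 aemeasurable_id' h₁)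
        (Integrable.of_mem_Icc 0 1 aemeasurable_id' h₂)
    have hpinsker := sq_integral_sub_integral_le_integral_llr (X := fun x ↦ x) hac h_int
      aemeasurable_id' hρ
    rw [hmean, sub_zero, one_pow, one_mul] at hpinsker
    rw [EReal.coe_le_coe_iff]
    calc (1 - α) ^ 2 / 2 * |(∫ x, x ∂ν₁) - ∫ x, x ∂ν₂| ^ 2
        ≤ 2 * ((1 - α) * ((∫ x, x ∂ν₁) - ∫ x, x ∂ν₂)) ^ 2 := by
          rw [sq_abs]
          nlinarith [sq_nonneg ((1 - α) * ((∫ x, x ∂ν₁) - ∫ x, x ∂ν₂))]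
      _ = 2 * ((∫ x, x ∂ν₁) - (α * ∫ x, x ∂ν₁ + (1 - α) * ∫ x, x ∂ν₂)) ^ 2 := by ring
      _ ≤ _ := hpinsker
  · exact le_top

end
end
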